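/- Let n ≥ 2 and r ≥ 1 be integers and a, b ∈ ℂ. Then the function p_r(t) = (a + b·t^(n−1))·(log t)^(r−1) on (0,∞) satisfies T^r(p_r)(t) = 0 for all t > 0, where T^r is the r-th iterate of the radial operator T(p)(t) = t²·p''(t) − (n−2)·t·p'(t). -/

import Mathlib

/-!
In the variable `s = log t` the operator `T` becomes `D (D - (n - 1))` with `D = d/ds`, so on
`t ^ m q(log t)` it acts on the polynomial `q` by `q'' + (2m + 1 - n) q' + m (m + 1 - n) q`. For
`m = 0` and `m = n - 1` the last term vanishes, so `T` lowers the degree in `log t` by one, and a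
sum of two such terms of degree below `r` is killed by `T ^ r`.
-/

/-- The radial hyperbolic operator `T(p)(t) = t²·p''(t) − (n−2)·t·p'(t)`. -/
noncomputable def radialT (n : ℕ) (p : ℝ → ℂ) : ℝ → ℂ := fun t =>
  (t : ℂ) ^ 2 * deriv (deriv p) t - ((n : ℂ) - 2) * (t : ℂ) * deriv p t

open Polynomial Filter Topology

theorem radialT_eq_of_hasDerivAt (n : ℕ) {p p' p'' : ℝ → ℂ} {t : ℝ}
    (h₁ : ∀ᶠ s in 𝓝 t, HasDerivAt p (p' s) s) (h₂ : HasDerivAt p' (p'' t) t) :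
    radialT n p t = (t : ℂ) ^ 2 * p'' t - ((n : ℂ) - 2) * t * p' t := by
  have hderiv : deriv p =ᶠ[𝓝 t] p' := h₁.mono fun s hs => hs.deriv
  rw [radialT, hderiv.deriv_eq, h₂.deriv, hderiv.eq_of_nhds]

theorem radialT_add (n : ℕ) {p q : ℝ → ℂ} {t : ℝ}
    (hp : ∀ᶠ s in 𝓝 t, DifferentiableAt ℝ p s) (hq : ∀ᶠ s in 𝓝 t, DifferentiableAt ℝ q s)
    (hp' : DifferentiableAt ℝ (deriv p) t) (hq' : DifferentiableAt ℝ (deriv q) t) :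
    radialT n (p + q) t = radialT n p t + radialT n q t := by
  have hderiv : deriv (p + q) =ᶠ[𝓝 t] deriv p + deriv q :=
    (hp.and hq).mono fun s hs => deriv_add hs.1 hs.2
  rw [radialT, radialT, radialT, hderiv.deriv_eq, hderiv.eq_of_nhds, deriv_add hp' hq']
  simp only [Pi.add_apply]
  ring

theorem radialT_congr (n : ℕ) {p q : ℝ → ℂ} {s : Set ℝ} (hs : IsOpen s) (h : Set.EqOn p q s) :
    Set.EqOn (radialT n p) (radialT n q) s := by
  intro t ht
  have h' : deriv p =ᶠ[𝓝 t] deriv q :=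
    (hs.eventually_mem ht).mono fun u hu => EventuallyEq.deriv_eq ((hs.eventually_mem hu).mono h)
  rw [radialT, radialT, h'.deriv_eq, h'.eq_of_nhds]

theorem iterate_radialT_congr (n k : ℕ) {p q : ℝ → ℂ} {s : Set ℝ} (hs : IsOpen s)
    (h : Set.EqOn p q s) : Set.EqOn ((radialT n)^[k] p) ((radialT n)^[k] q) s := by
  induction k generalizing p q with
  | zero => exact h
  | succ k ih => exact ih (radialT_congr n hs h)

noncomputable def logMonomial (m : ℤ) (q : ℂ[X]) (t : ℝ) : ℂ :=
  (t : ℂ) ^ m * q.eval (Real.log t : ℂ)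

-- For `t < 0`, `Real.log t = log |t|`, whose derivative is still `t⁻¹`.
theorem hasDerivAt_logMonomial (m : ℤ) (q : ℂ[X]) {t : ℝ} (ht : t ≠ 0) :
    HasDerivAt (logMonomial m q) (logMonomial (m - 1) (C (m : ℂ) * q + derivative q) t) t := by
  have htC : (t : ℂ) ≠ 0 := Complex.ofReal_ne_zero.mpr ht
  have hpow : HasDerivAt (fun s : ℝ => (s : ℂ) ^ m) ((m : ℂ) * (t : ℂ) ^ (m - 1)) t :=
    (hasDerivAt_zpow m (t : ℂ) (Or.inl htC)).comp_ofReal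
  have hlog : HasDerivAt (fun s : ℝ => (Real.log s : ℂ)) (t : ℂ)⁻¹ t := by
    simpa using (Real.hasDerivAt_log ht).ofReal_comp
  have heval := (q.hasDerivAt (Real.log t : ℂ)).comp t hlog
  refine (hpow.fun_mul heval).congr_deriv ?_
  have : (t : ℂ) ^ m = (t : ℂ) ^ (m - 1) * t := by
    rw [← zpow_add_one₀ htC, sub_add_cancel]
  simp only [logMonomial, Function.comp_apply, eval_add, eval_mul, eval_C, this]
  field_simp

theorem differentiableAt_deriv_logMonomial (m : ℤ) (q : ℂ[X]) {t : ℝ} (ht : t ≠ 0) :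
    DifferentiableAt ℝ (deriv (logMonomial m q)) t := by
  have h : deriv (logMonomial m q) =ᶠ[𝓝 t] logMonomial (m - 1) (C (m : ℂ) * q + derivative q) :=
    (isOpen_ne.eventually_mem ht).mono fun s hs => (hasDerivAt_logMonomial m q hs).deriv
  exact ((hasDerivAt_logMonomial _ _ ht).differentiableAt).congr_of_eventuallyEq h

noncomputable def radialPoly (n : ℕ) (m : ℤ) (q : ℂ[X]) : ℂ[X] :=
  derivative (derivative q) + C (2 * m + 1 - n : ℂ) * derivative q + C (m * (m + 1 - n) : ℂ) * q

theorem radialT_logMonomial (n : ℕ) (m : ℤ) (q : ℂ[X]) {t : ℝ} (ht : t ≠ 0) :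
    radialT n (logMonomial m q) t = logMonomial m (radialPoly n m q) t := by
  have htC : (t : ℂ) ≠ 0 := Complex.ofReal_ne_zero.mpr ht
  rw [radialT_eq_of_hasDerivAt n
    ((isOpen_ne.eventually_mem ht).mono fun s hs => hasDerivAt_logMonomial m q hs)
    (hasDerivAt_logMonomial _ _ ht)]
  simp only [logMonomial, radialPoly, eval_add, eval_mul, eval_C, derivative_add, derivative_mul,
    derivative_C, zero_mul, zero_add]
  have h1 : (t : ℂ) ^ m = (t : ℂ) ^ (m - 1) * t := by
    rw [← zpow_add_one₀ htC, sub_add_cancel]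
  have h2 : (t : ℂ) ^ (m - 1) = (t : ℂ) ^ (m - 1 - 1) * t := by
    rw [← zpow_add_one₀ htC, sub_add_cancel]
  rw [h1, h2]
  push_cast
  ring

theorem radialT_logMonomial_add (n : ℕ) (m₀ m₁ : ℤ) (q₀ q₁ : ℂ[X]) {t : ℝ} (ht : t ≠ 0) :
    radialT n (logMonomial m₀ q₀ + logMonomial m₁ q₁) t =
      (logMonomial m₀ (radialPoly n m₀ q₀) + logMonomial m₁ (radialPoly n m₁ q₁)) t := by
  have hdiff (m : ℤ) (q : ℂ[X]) : ∀ᶠ s in 𝓝 t, DifferentiableAt ℝ (logMonomial m q) s :=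
    (isOpen_ne.eventually_mem ht).mono fun s hs => (hasDerivAt_logMonomial m q hs).differentiableAt
  rw [radialT_add n (hdiff m₀ q₀) (hdiff m₁ q₁) (differentiableAt_deriv_logMonomial m₀ q₀ ht)
    (differentiableAt_deriv_logMonomial m₁ q₁ ht), radialT_logMonomial n m₀ q₀ ht,
    radialT_logMonomial n m₁ q₁ ht, Pi.add_apply]

theorem degree_derivative_lt_of_degree_lt_succ {R : Type*} [Semiring R] {q : R[X]} {k : ℕ}
    (h : q.degree < ↑(k + 1)) : (derivative q).degree < k := by
  rcases eq_or_ne q 0 with rfl | hq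
  · simp
  · exact (degree_derivative_lt hq).trans_le (Order.le_of_lt_succ h)

theorem degree_radialPoly_lt (n : ℕ) {m : ℤ} (hm : (m : ℂ) * (m + 1 - n) = 0) {q : ℂ[X]} {k : ℕ}
    (h : q.degree < ↑(k + 1)) : (radialPoly n m q).degree < k := by
  have h' := degree_derivative_lt_of_degree_lt_succ h
  rw [radialPoly, hm, C_0, zero_mul, add_zero]
  refine (degree_add_le _ _).trans_lt (max_lt ?_ ?_)
  · exact degree_derivative_le.trans_lt h'
  · rw [← smul_eq_C_mul]
    exact (degree_smul_le _ _).trans_lt h'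

theorem iterate_radialT_logMonomial_add (n : ℕ) {m₀ m₁ : ℤ} (hm₀ : (m₀ : ℂ) * (m₀ + 1 - n) = 0)
    (hm₁ : (m₁ : ℂ) * (m₁ + 1 - n) = 0) (k : ℕ) {q₀ q₁ : ℂ[X]} (hq₀ : q₀.degree < k)
    (hq₁ : q₁.degree < k) :
    Set.EqOn ((radialT n)^[k] (logMonomial m₀ q₀ + logMonomial m₁ q₁)) 0 {0}ᶜ := by
  induction k generalizing q₀ q₁ with
  | zero =>
    rw [Nat.cast_zero, Nat.WithBot.lt_zero_iff, degree_eq_bot] at hq₀ hq₁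
    intro t _
    simp [logMonomial, hq₀, hq₁]
  | succ k ih =>
    rw [Function.iterate_succ_apply]
    exact (iterate_radialT_congr n k isOpen_compl_singleton
      fun t ht => radialT_logMonomial_add n m₀ m₁ q₀ q₁ ht).trans
      (ih (degree_radialPoly_lt n hm₀ hq₀) (degree_radialPoly_lt n hm₁ hq₁))

theorem radialT_iterate_vanishes_general (n r : ℕ) (hr : 1 ≤ r) (a b : ℂ) :
    ∀ t ∈ Set.Ioi (0 : ℝ),
      (radialT n)^[r]
        (fun t => (a + b * (t : ℂ) ^ (n - 1)) * (Real.log t : ℂ) ^ (r - 1)) t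
        = 0 := by
  have hprofile : (fun t : ℝ => (a + b * (t : ℂ) ^ (n - 1)) * (Real.log t : ℂ) ^ (r - 1)) =
      logMonomial 0 (C a * X ^ (r - 1)) + logMonomial ((n - 1 : ℕ) : ℤ) (C b * X ^ (r - 1)) := by
    funext t
    simp only [logMonomial, Pi.add_apply, zpow_zero, zpow_natCast, eval_mul, eval_C, eval_pow,
      eval_X]
    ring
  have hdeg (c : ℂ) : (C c * X ^ (r - 1)).degree < (r : WithBot ℕ) :=
    (degree_C_mul_X_pow_le _ _).trans_lt (WithBot.coe_lt_coe.mpr (Nat.sub_lt hr one_pos))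
  have hroot : (((n - 1 : ℕ) : ℤ) : ℂ) * (((n - 1 : ℕ) : ℤ) + 1 - n) = 0 := by
    cases n <;> simp
  intro t ht
  rw [hprofile]
  exact iterate_radialT_logMonomial_add n (by simp) hroot r (hdeg a) (hdeg b) (ne_of_gt ht)

/-- For integers `n ≥ 2`, `r ≥ 1` and `a, b ∈ ℂ`, the function
`p_r(t) = (a + b·t^(n−1))·(log t)^(r−1)` satisfies `T^r(p_r)(t) = 0` for all
`t > 0`, where `T^r` is the `r`-th iterate of the radial operator `T`. -/
theorem radialT_iterate_vanishes (n r : ℕ) (hn : 2 ≤ n) (hr : 1 ≤ r) (a b : ℂ) :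
    ∀ t ∈ Set.Ioi (0 : ℝ),
      (radialT n)^[r]
        (fun t => (a + b * (t : ℂ) ^ (n - 1)) * (Real.log t : ℂ) ^ (r - 1)) t
        = 0 :=
  radialT_iterate_vanishes_general n r hr a b
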